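/- arXiv:1308.0505 — 2 statements merged into one kernel-verified Lean document; each statement's English description precedes it below -/
import Mathlib

section
/- Let n_k = ⌊k^δ⌋ with δ ∈ (1/2,1). Then lim_{k→∞} n_k/k = 0 and lim_{k→∞} √k/n_k = 0, and consequently, for every fixed ℓ ∈ ℕ₀, lim_{k→∞} (n_k·m_{ℓ,k})/k = σ(0)²/‖σ‖₂², where σ_i = σ(i/n_k), m_{ℓ,k} = ⌊(σ_ℓ²/Σ_{i=0}^{n_k−1} σ_i²)·(k − n_k)⌋ + 1 and ‖σ‖₂ = (∫₀¹ σ(t)² dt)^{1/2}. -/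
open MeasureTheory ProbabilityTheory Filter Set
open scoped ENNReal NNReal

noncomputable section

/-- Best `L∞`-approximation error of `f` on `[a,b]` by polynomials of degree at most `r`. -/
def polyDist (r : ℕ) (f : ℝ → ℝ) (a b : ℝ) : ℝ :=
  ⨅ p : {p : Polynomial ℝ // p.natDegree ≤ r},
    ⨆ s : Set.Icc a b, |f s - Polynomial.eval (s : ℝ) (p : Polynomial ℝ)|

/-- The stopping times `τ_{j,ε}` of consecutive maximal subintervals (starting at `a`)
on which `f` admits best polynomial approximation of degree at most `r` with error `≤ ε`. -/
def tauSeq (r : ℕ) (f : ℝ → ℝ) (a ε : ℝ) : ℕ → ℝ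
  | 0 => a
  | j + 1 => sInf {t : ℝ | tauSeq r f a ε j < t ∧ ε < polyDist r f (tauSeq r f a ε j) t}

/-- The pathwise minimal error `γ_m` of approximating `f` on `[a,b]` by splines of degree
at most `r` with `m - 1` free knots. -/
def gammaErr (r : ℕ) (f : ℝ → ℝ) (a b : ℝ) (m : ℕ) : ℝ :=
  sInf {ε : ℝ | 0 < ε ∧ b ≤ tauSeq r f a ε m}

/-- `W` is a standard one-dimensional Brownian motion under `P`. -/
structure IsBrownianMotion {Ω : Type*} [MeasurableSpace Ω] (P : Measure Ω)
    (W : ℝ → Ω → ℝ) : Prop where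
  measurable : ∀ t : ℝ, Measurable (W t)
  init : ∀ ω, W 0 ω = 0
  cont : ∀ᵐ ω ∂P, Continuous fun t => W t ω
  gauss_incr : ∀ s t : ℝ, 0 ≤ s → s ≤ t →
    Measure.map (fun ω => W t ω - W s ω) P = gaussianReal 0 (Real.toNNReal (t - s))
  indep_incr : ∀ (n : ℕ) (t : ℕ → ℝ), Monotone t → 0 ≤ t 0 →
    iIndepFun
      (fun i : Fin n => fun ω => W (t ((i : ℕ) + 1)) ω - W (t (i : ℕ)) ω) P

/-- The expectation `E(τ_{1,1})`. -/
def Etau {Ω : Type*} [MeasurableSpace Ω] (P : Measure Ω) (W : ℝ → Ω → ℝ) (r : ℕ) : ℝ≥0∞ :=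
  ∫⁻ ω, ENNReal.ofReal (tauSeq r (fun t => W t ω) 0 1 1) ∂P

/-- Outer expectation `E*` of a (not necessarily measurable) nonnegative quantity. -/
def outerExp {Ω : Type*} [MeasurableSpace Ω] (P : Measure Ω) (f : Ω → ℝ) : ℝ≥0∞ :=
  sInf {I : ℝ≥0∞ | ∃ g : Ω → ℝ≥0∞, Measurable g ∧ (∀ ω, ENNReal.ofReal (f ω) ≤ g ω) ∧
    I = ∫⁻ ω, g ω ∂P}

/-- `φ` is a polynomial spline of degree at most `r` on `[a,b]` with `m` pieces
(i.e. `m + 1` knots, `m - 1` of them free), in the sense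
`φ = Σ_{j=1}^{m} 1_{(t_{j-1}, t_j]} · π_j`. -/
def IsSpline (r m : ℕ) (a b : ℝ) (φ : ℝ → ℝ) : Prop :=
  ∃ (t : ℕ → ℝ) (p : ℕ → Polynomial ℝ),
    t 0 = a ∧ t m = b ∧ (∀ j < m, t j < t (j + 1)) ∧
    (∀ j, (p j).natDegree ≤ r) ∧
    ∀ j < m, ∀ s ∈ Set.Ioc (t j) (t (j + 1)), φ s = Polynomial.eval s (p j)

/-!
Since `⌊x⌋₊ / x → 1`, both growth claims reduce to statements about powers of `k`.
Writing `a_k` for the argument of the floor in `m_{ℓ,k}`, the quantity `n_k m_{ℓ,k} / k`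
lies between `n_k a_k / k` and `n_k a_k / k + n_k / k`, and
`n_k a_k / k = σ(ℓ/n_k)² / (S_k / n_k) · (1 - n_k / k)`, where `S_k / n_k` is a left Riemann
sum of `σ²`. Riemann sums of a continuous function converge to its integral by uniform continuity.
-/

open scoped Topology

lemma abs_integral_sub_mul_le {g : ℝ → ℝ} {a b ε : ℝ} (hab : a ≤ b)
    (hg : IntervalIntegrable g volume a b) (h : ∀ t ∈ Ioc a b, |g t - g a| ≤ ε) :
    |(∫ t in a..b, g t) - (b - a) * g a| ≤ ε * (b - a) := by
  have hsub : (∫ t in a..b, g t) - (b - a) * g a = ∫ t in a..b, (g t - g a) := by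
    rw [intervalIntegral.integral_sub hg intervalIntegrable_const,
      intervalIntegral.integral_const, smul_eq_mul]
  rw [hsub, ← abs_of_nonneg (sub_nonneg.mpr hab)]
  refine intervalIntegral.norm_integral_le_of_norm_le_const (f := fun t => g t - g a)
    fun t ht => ?_
  rw [uIoc_of_le hab] at ht
  exact h t ht

lemma abs_riemannSum_sub_integral_le {g : ℝ → ℝ} (hg : ContinuousOn g (Icc 0 1)) {N : ℕ}
    (hN : 0 < N) {ε : ℝ}
    (hε : ∀ x ∈ Icc (0 : ℝ) 1, ∀ y ∈ Icc (0 : ℝ) 1, |x - y| ≤ 1 / N → |g x - g y| ≤ ε) :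
    |(∑ i ∈ Finset.range N, g (i / N)) / N - ∫ t in (0 : ℝ)..1, g t| ≤ ε := by
  have hN' : (0 : ℝ) < N := Nat.cast_pos.mpr hN
  have hmem : ∀ i ≤ N, (i : ℝ) / N ∈ Icc (0 : ℝ) 1 := fun i hi =>
    ⟨by positivity, (div_le_one hN').mpr (Nat.cast_le.mpr hi)⟩
  have hstep : ∀ i : ℕ, ((i + 1 : ℕ) : ℝ) / N - i / N = 1 / N := fun i => by
    push_cast; ring
  have hpiece : ∀ i < N, IntervalIntegrable g volume (i / N) ((i + 1 : ℕ) / N) := fun i hi =>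
    (hg.mono (uIcc_subset_Icc (hmem i hi.le) (hmem (i + 1) hi))).intervalIntegrable
  have hsplit : ∫ t in (0 : ℝ)..1, g t =
      ∑ i ∈ Finset.range N, ∫ t in (i / N : ℝ)..((i + 1 : ℕ) / N), g t := by
    rw [intervalIntegral.sum_integral_adjacent_intervals hpiece]
    simp [hN'.ne']
  have hriemann : (∑ i ∈ Finset.range N, g (i / N)) / N =
      ∑ i ∈ Finset.range N, (((i + 1 : ℕ) : ℝ) / N - i / N) * g (i / N) := by
    simp only [hstep, ← Finset.mul_sum]
    ring
  rw [hsplit, hriemann, ← Finset.sum_sub_distrib]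
  refine (Finset.abs_sum_le_sum_abs _ _).trans ?_
  calc ∑ i ∈ Finset.range N, |(((i + 1 : ℕ) : ℝ) / N - i / N) * g (i / N) -
        ∫ t in (i / N : ℝ)..((i + 1 : ℕ) / N), g t|
      ≤ ∑ i ∈ Finset.range N, ε * (((i + 1 : ℕ) : ℝ) / N - i / N) := by
        refine Finset.sum_le_sum fun i hi => ?_
        have hi := Finset.mem_range.mp hi
        rw [abs_sub_comm]
        refine abs_integral_sub_mul_le (sub_nonneg.mp (by rw [hstep]; positivity)) (hpiece i hi)
          fun t ht => ?_
        have ht' : t ∈ Icc (0 : ℝ) 1 :=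
          Icc_subset_Icc (hmem i hi.le).1 (hmem (i + 1) hi).2 (Ioc_subset_Icc_self ht)
        refine hε t ht' _ (hmem i hi.le) ?_
        rw [abs_of_nonneg (by linarith [ht.1]), ← hstep i]
        linarith [ht.2]
    _ = ε := by
        simp only [hstep, Finset.sum_const, Finset.card_range, nsmul_eq_mul]
        field_simp

theorem tendsto_riemannSum_integral {g : ℝ → ℝ} (hg : ContinuousOn g (Icc 0 1)) :
    Tendsto (fun N : ℕ => (∑ i ∈ Finset.range N, g (i / N)) / N) atTop
      (𝓝 (∫ t in (0 : ℝ)..1, g t)) := by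
  rw [Metric.tendsto_atTop]
  intro ε hε
  obtain ⟨η, hη, hgη⟩ := Metric.uniformContinuousOn_iff.mp
    (isCompact_Icc.uniformContinuousOn_of_continuous hg) (ε / 2) (half_pos hε)
  obtain ⟨N₀, hN₀⟩ := exists_nat_one_div_lt hη
  refine ⟨N₀ + 1, fun N hN => ?_⟩
  have hN' : (0 : ℝ) < N := Nat.cast_pos.mpr (by omega)
  have hmesh : 1 / (N : ℝ) < η :=
    lt_of_le_of_lt (one_div_le_one_div_of_le (by positivity) (by exact_mod_cast hN)) hN₀
  refine lt_of_le_of_lt (abs_riemannSum_sub_integral_le hg (by omega) fun x hx y hy hxy => ?_)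
    (half_lt_self hε)
  exact (hgη x hx y hy (lt_of_le_of_lt hxy hmesh)).le

lemma tendsto_natFloor_rpow_div_rpow {δ : ℝ} (hδ : 0 < δ) :
    Tendsto (fun k : ℕ => (⌊(k : ℝ) ^ δ⌋₊ : ℝ) / (k : ℝ) ^ δ) atTop (𝓝 1) :=
  tendsto_nat_floor_div_atTop.comp ((tendsto_rpow_atTop hδ).comp tendsto_natCast_atTop_atTop)

lemma tendsto_natFloor_rpow_div_self {δ : ℝ} (hδ₀ : 0 < δ) (hδ₁ : δ < 1) :
    Tendsto (fun k : ℕ => (⌊(k : ℝ) ^ δ⌋₊ : ℝ) / k) atTop (𝓝 0) := by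
  have hpow : Tendsto (fun k : ℕ => (k : ℝ) ^ (-(1 - δ))) atTop (𝓝 0) :=
    (tendsto_rpow_neg_atTop (by linarith)).comp tendsto_natCast_atTop_atTop
  have := (tendsto_natFloor_rpow_div_rpow hδ₀).mul hpow
  rw [one_mul] at this
  refine this.congr' ?_
  filter_upwards [eventually_gt_atTop 0] with k hk
  have hk' : (0 : ℝ) < k := Nat.cast_pos.mpr hk
  rw [neg_sub, Real.rpow_sub hk', Real.rpow_one]
  field_simp

lemma tendsto_sqrt_div_natFloor_rpow {δ : ℝ} (hδ : 1 / 2 < δ) :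
    Tendsto (fun k : ℕ => √(k : ℝ) / ⌊(k : ℝ) ^ δ⌋₊) atTop (𝓝 0) := by
  have hpow : Tendsto (fun k : ℕ => (k : ℝ) ^ (-(δ - 1 / 2))) atTop (𝓝 0) :=
    (tendsto_rpow_neg_atTop (by linarith)).comp tendsto_natCast_atTop_atTop
  have := hpow.div (tendsto_natFloor_rpow_div_rpow (by linarith)) one_ne_zero
  rw [zero_div] at this
  refine this.congr' ?_
  filter_upwards [eventually_gt_atTop 0] with k hk
  have hk' : (0 : ℝ) < k := Nat.cast_pos.mpr hk
  rw [Pi.div_apply, div_div_eq_mul_div, ← Real.rpow_add hk', Real.sqrt_eq_rpow]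
  ring_nf

lemma tendsto_mul_natFloor_add_one {ι : Type*} {l : Filter ι} {u a : ι → ℝ} {L : ℝ}
    (hu : Tendsto u l (𝓝 0)) (hu₀ : ∀ᶠ i in l, 0 ≤ u i) (ha₀ : ∀ᶠ i in l, 0 ≤ a i)
    (hua : Tendsto (fun i => u i * a i) l (𝓝 L)) :
    Tendsto (fun i => u i * (⌊a i⌋₊ + 1)) l (𝓝 L) := by
  have hupper : Tendsto (fun i => u i * a i + u i) l (𝓝 L) := by
    simpa using hua.add hu
  refine tendsto_of_tendsto_of_tendsto_of_le_of_le' hua hupper ?_ ?_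
  · filter_upwards [hu₀] with i hui
    exact mul_le_mul_of_nonneg_left (Nat.lt_floor_add_one _).le hui
  · filter_upwards [hu₀, ha₀] with i hui hai
    rw [mul_add_one]
    gcongr
    exact Nat.floor_le hai

theorem tendsto_natCast_mul_weight_div {σ : ℝ → ℝ} (hσ : ContinuousOn σ (Icc 0 1))
    (hI : ∫ t in (0 : ℝ)..1, σ t ^ 2 ≠ 0) {n : ℕ → ℕ} (hn : Tendsto n atTop atTop)
    (hnk : Tendsto (fun k : ℕ => (n k : ℝ) / k) atTop (𝓝 0)) (ℓ : ℕ) :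
    Tendsto (fun k : ℕ => (n k : ℝ) *
        ((⌊σ (ℓ / n k) ^ 2 / (∑ i ∈ Finset.range (n k), σ (i / n k) ^ 2) *
          ((k : ℝ) - n k)⌋₊ + 1 : ℕ) : ℝ) / k)
      atTop (𝓝 (σ 0 ^ 2 / ∫ t in (0 : ℝ)..1, σ t ^ 2)) := by
  set S : ℕ → ℝ := fun k => ∑ i ∈ Finset.range (n k), σ (i / n k) ^ 2
  set A : ℕ → ℝ := fun k => σ (ℓ / n k) ^ 2
  have hS : Tendsto (fun k => S k / n k) atTop (𝓝 (∫ t in (0 : ℝ)..1, σ t ^ 2)) :=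
    (tendsto_riemannSum_integral (hσ.pow 2)).comp hn
  have hA : Tendsto A atTop (𝓝 (σ 0 ^ 2)) := by
    have hpt : Tendsto (fun k => (ℓ : ℝ) / n k) atTop (𝓝[Icc 0 1] 0) := by
      refine tendsto_nhdsWithin_iff.mpr
        ⟨tendsto_const_nhds.div_atTop (tendsto_natCast_atTop_atTop.comp hn), ?_⟩
      filter_upwards [hn.eventually_ge_atTop (ℓ + 1)] with k hk
      have hℓ : (ℓ : ℝ) ≤ n k := by exact_mod_cast (by omega : ℓ ≤ n k)
      exact ⟨by positivity, div_le_one_of_le₀ hℓ (by positivity)⟩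
    exact ((hσ 0 ⟨le_rfl, zero_le_one⟩).tendsto.comp hpt).pow 2
  have hn_lt : ∀ᶠ k in atTop, 0 < k ∧ n k < k := by
    filter_upwards [eventually_gt_atTop 0, hnk.eventually (eventually_lt_nhds zero_lt_one)]
      with k hk hlt
    exact ⟨hk, by exact_mod_cast (div_lt_one (by positivity)).mp hlt⟩
  have hlim : Tendsto (fun k : ℕ => (n k : ℝ) / k * (A k / S k * ((k : ℝ) - n k))) atTop
      (𝓝 (σ 0 ^ 2 / ∫ t in (0 : ℝ)..1, σ t ^ 2)) := by
    have := (hA.div hS hI).mul ((tendsto_const_nhds (x := (1 : ℝ))).sub hnk)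
    rw [sub_zero, mul_one] at this
    refine this.congr' ?_
    filter_upwards [hn_lt, hS.eventually_ne hI, hn.eventually_gt_atTop 0]
      with k hk hSk hnk0
    have hk' : (k : ℝ) ≠ 0 := by exact_mod_cast hk.1.ne'
    have hn' : (n k : ℝ) ≠ 0 := by positivity
    have hS' : S k ≠ 0 := fun h => hSk (by rw [h, zero_div])
    rw [Pi.div_apply]
    field_simp
  have hweight_nonneg : ∀ᶠ k in atTop, 0 ≤ A k / S k * ((k : ℝ) - n k) := by
    filter_upwards [hn_lt] with k hk
    have : (n k : ℝ) ≤ k := by exact_mod_cast hk.2.le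
    exact mul_nonneg (by positivity) (by linarith)
  refine (tendsto_mul_natFloor_add_one hnk (Eventually.of_forall fun k => by positivity)
    hweight_nonneg hlim).congr fun k => ?_
  push_cast
  ring

/-- `n_k = ⌊k^δ⌋` with `δ ∈ (1/2,1)` satisfies `n_k/k → 0` and `√k/n_k → 0`,
and for every fixed `ℓ`, `(n_k · m_{ℓ,k})/k → σ(0)²/‖σ‖₂²`. -/
theorem stmt0 (σ : ℝ → ℝ) (K : ℝ≥0) (hσLip : LipschitzOnWith K σ (Set.Icc 0 1))
    (hσpos : ∀ t ∈ Set.Icc (0 : ℝ) 1, 0 < |σ t|)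
    (δ : ℝ) (hδ : δ ∈ Set.Ioo (1 / 2 : ℝ) 1)
    (n : ℕ → ℕ) (hn : ∀ k : ℕ, n k = ⌊(k : ℝ) ^ δ⌋₊)
    (m : ℕ → ℕ → ℕ)
    (hm : ∀ ℓ k : ℕ, m ℓ k =
      ⌊σ ((ℓ : ℝ) / (n k : ℝ)) ^ 2 / (∑ i ∈ Finset.range (n k), σ ((i : ℝ) / (n k : ℝ)) ^ 2) *
        ((k : ℝ) - (n k : ℝ))⌋₊ + 1) :
    Tendsto (fun k : ℕ => (n k : ℝ) / (k : ℝ)) atTop (nhds 0) ∧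
    Tendsto (fun k : ℕ => Real.sqrt (k : ℝ) / (n k : ℝ)) atTop (nhds 0) ∧
    ∀ ℓ : ℕ, Tendsto (fun k : ℕ => (n k : ℝ) * (m ℓ k : ℝ) / (k : ℝ)) atTop
      (nhds (σ 0 ^ 2 / (∫ t in (0 : ℝ)..1, σ t ^ 2))) := by
  obtain ⟨hδ_gt, hδ_lt⟩ := hδ
  obtain rfl : n = fun k : ℕ => ⌊(k : ℝ) ^ δ⌋₊ := funext hn
  have hn_ratio := tendsto_natFloor_rpow_div_self (by linarith) hδ_lt
  have hn_top : Tendsto (fun k : ℕ => ⌊(k : ℝ) ^ δ⌋₊) atTop atTop :=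
    tendsto_nat_floor_atTop.comp
      ((tendsto_rpow_atTop (by linarith)).comp tendsto_natCast_atTop_atTop)
  have hσ : ContinuousOn σ (Icc 0 1) := hσLip.continuousOn
  have hI : 0 < ∫ t in (0 : ℝ)..1, σ t ^ 2 :=
    intervalIntegral.intervalIntegral_pos_of_pos_on
      ((hσ.pow 2).intervalIntegrable_of_Icc zero_le_one)
      (fun t ht => by rw [← sq_abs]; exact pow_pos (hσpos t (Ioo_subset_Icc_self ht)) 2)
      zero_lt_one
  refine ⟨hn_ratio, tendsto_sqrt_div_natFloor_rpow hδ_gt, fun ℓ => ?_⟩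
  simp only [hm]
  exact tendsto_natCast_mul_weight_div hσ hI.ne' hn_top hn_ratio ℓ

end
end

section
/- For every c > 0 and every q ≥ 1, lim_{k→∞} n_k^{q+2} · Σ_{ℓ=0}^{n_k−1} exp(−2·c·m_{ℓ,k}) = 0. -/
open MeasureTheory ProbabilityTheory Filter Set
open scoped ENNReal NNReal

noncomputable section

/-!
Since `σ²` is continuous and positive on `[0,1]`, it lies between constants `0 < a ≤ b`.
Then every weight `σ_ℓ² / Σ σ_i²` is at least `a / (n_k b)`, and as `n_k ≤ k^δ = o(k)`,
every `m_{ℓ,k}` is at least `(a / 2b) k^{1-δ}`. Hence the quantity is at most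
`k^{δ(q+3)} exp(-(c a / b) k^{1-δ})`, which tends to `0` because `1 - δ > 0`.
-/

theorem IsCompact.exists_pos_bounds_of_continuousOn {α : Type*} [TopologicalSpace α]
    {s : Set α} {f : α → ℝ} (hs : IsCompact s) (hne : s.Nonempty) (hf : ContinuousOn f s)
    (hpos : ∀ t ∈ s, 0 < f t) :
    ∃ a b : ℝ, 0 < a ∧ a ≤ b ∧ ∀ t ∈ s, a ≤ f t ∧ f t ≤ b := by
  obtain ⟨t₀, ht₀, hmin⟩ := hs.exists_isMinOn hne hf
  obtain ⟨t₁, -, hmax⟩ := hs.exists_isMaxOn hne hf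
  exact ⟨f t₀, f t₁, hpos t₀ ht₀, hmax ht₀, fun t ht => ⟨hmin ht, hmax ht⟩⟩

open Finset in
theorem div_mul_le_floor_share_add_one {w : ℕ → ℝ} {N ℓ : ℕ} {a b T : ℝ} (ha : 0 < a)
    (hw : ∀ i < N, a ≤ w i ∧ w i ≤ b) (hℓ : ℓ < N) (hT : 0 ≤ T) :
    a / (N * b) * T ≤ ⌊w ℓ / (∑ i ∈ range N, w i) * T⌋₊ + 1 := by
  have hsum_pos : 0 < ∑ i ∈ range N, w i :=
    sum_pos (fun i hi => ha.trans_le (hw i (mem_range.1 hi)).1) ⟨ℓ, mem_range.2 hℓ⟩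
  have hsum_le : ∑ i ∈ range N, w i ≤ N * b := by
    simpa using sum_le_card_nsmul (range N) w b fun i hi => (hw i (mem_range.1 hi)).2
  have hshare : a / (N * b) ≤ w ℓ / ∑ i ∈ range N, w i :=
    div_le_div₀ (ha.trans_le (hw ℓ hℓ).1).le (hw ℓ hℓ).1 hsum_pos hsum_le
  calc a / (N * b) * T ≤ w ℓ / (∑ i ∈ range N, w i) * T := by gcongr
    _ ≤ ⌊w ℓ / (∑ i ∈ range N, w i) * T⌋₊ + 1 := (Nat.lt_floor_add_one _).le

theorem eventually_rpow_le_div_two {δ : ℝ} (hδ : δ < 1) :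
    ∀ᶠ x : ℝ in atTop, x ^ δ ≤ x / 2 := by
  have hsmall : Tendsto (fun x : ℝ => x ^ (-(1 - δ))) atTop (nhds 0) :=
    tendsto_rpow_neg_atTop (by linarith)
  filter_upwards [hsmall.eventually_le_const one_half_pos, eventually_gt_atTop 0]
    with x hx hx0
  calc x ^ δ = x ^ (-(1 - δ)) * x := by
        rw [← Real.rpow_add_one hx0.ne']; ring_nf
    _ ≤ 1 / 2 * x := by gcongr
    _ = x / 2 := by ring

theorem tendsto_rpow_mul_exp_neg_mul_rpow_atTop_nhds_zero (p C ε : ℝ) (hC : 0 < C)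
    (hε : 0 < ε) :
    Tendsto (fun x : ℝ => x ^ p * Real.exp (-C * x ^ ε)) atTop (nhds 0) := by
  refine ((tendsto_rpow_mul_exp_neg_mul_atTop_nhds_zero (p / ε) C hC).comp
    (tendsto_rpow_atTop hε)).congr' ?_
  filter_upwards [eventually_ge_atTop 0] with x hx
  simp only [Function.comp_apply]
  rw [← Real.rpow_mul hx, mul_div_cancel₀ p hε.ne']

open Finset in
theorem rpow_mul_sum_exp_le {N : ℕ} {m : ℕ → ℝ} {x p c μ : ℝ} (hx : 0 < x)
    (hN : (N : ℝ) ≤ x) (hp : 0 ≤ p) (hc : 0 ≤ c) (hm : ∀ ℓ < N, μ ≤ m ℓ) :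
    (N : ℝ) ^ p * ∑ ℓ ∈ range N, Real.exp (-2 * c * m ℓ) ≤
      x ^ (p + 1) * Real.exp (-2 * c * μ) := by
  have hsum : ∑ ℓ ∈ range N, Real.exp (-2 * c * m ℓ) ≤ N * Real.exp (-2 * c * μ) := by
    simpa using sum_le_card_nsmul (range N) _ _ fun ℓ hℓ =>
      Real.exp_le_exp.2 (by nlinarith [hm ℓ (mem_range.1 hℓ)])
  calc (N : ℝ) ^ p * ∑ ℓ ∈ range N, Real.exp (-2 * c * m ℓ)
      ≤ x ^ p * (x * Real.exp (-2 * c * μ)) := by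
        gcongr
        exact hsum.trans (by gcongr)
    _ = x ^ (p + 1) * Real.exp (-2 * c * μ) := by
        rw [Real.rpow_add_one hx.ne']; ring

/-- for every `c > 0` and `q ≥ 1`,
`n_k^{q+2} · Σ_{ℓ=0}^{n_k−1} exp(−2·c·m_{ℓ,k}) → 0`. -/
theorem stmt1 (σ : ℝ → ℝ) (K : ℝ≥0) (hσLip : LipschitzOnWith K σ (Set.Icc 0 1))
    (hσpos : ∀ t ∈ Set.Icc (0 : ℝ) 1, 0 < |σ t|)
    (δ : ℝ) (hδ : δ ∈ Set.Ioo (1 / 2 : ℝ) 1)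
    (n : ℕ → ℕ) (hn : ∀ k : ℕ, n k = ⌊(k : ℝ) ^ δ⌋₊)
    (m : ℕ → ℕ → ℕ)
    (hm : ∀ ℓ k : ℕ, m ℓ k =
      ⌊σ ((ℓ : ℝ) / (n k : ℝ)) ^ 2 / (∑ i ∈ Finset.range (n k), σ ((i : ℝ) / (n k : ℝ)) ^ 2) *
        ((k : ℝ) - (n k : ℝ))⌋₊ + 1)
    (c : ℝ) (hc : 0 < c) (q : ℝ) (hq : 1 ≤ q) :
    Tendsto (fun k : ℕ =>
        (n k : ℝ) ^ (q + 2) * ∑ ℓ ∈ Finset.range (n k), Real.exp (-2 * c * (m ℓ k : ℝ)))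
      atTop (nhds 0) := by
  obtain ⟨-, hδ₁⟩ := hδ
  obtain ⟨a, b, ha, hab, hσ2⟩ := isCompact_Icc.exists_pos_bounds_of_continuousOn
    (nonempty_Icc.2 zero_le_one) (hσLip.continuousOn.pow 2)
    fun t ht => by simpa [sq_abs] using pow_pos (hσpos t ht) 2
  have hb : 0 < b := ha.trans_le hab
  refine squeeze_zero' (Eventually.of_forall fun k => by positivity) ?_
    ((tendsto_rpow_mul_exp_neg_mul_rpow_atTop_nhds_zero (δ * (q + 3)) (c * a / b) (1 - δ)
      (by positivity) (by linarith)).comp tendsto_natCast_atTop_atTop)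
  filter_upwards [eventually_gt_atTop 0,
    tendsto_natCast_atTop_atTop.eventually (eventually_rpow_le_div_two hδ₁)] with k hk hkδ
  have hk₀ : (0 : ℝ) < k := Nat.cast_pos.2 hk
  have hnk : (n k : ℝ) ≤ (k : ℝ) ^ δ := hn k ▸ Nat.floor_le (by positivity)
  have hm_ge : ∀ ℓ < n k, a / (2 * b) * (k : ℝ) ^ (1 - δ) ≤ m ℓ k := by
    intro ℓ hℓ
    have hn₀ : (0 : ℝ) < n k := by exact_mod_cast (Nat.zero_le ℓ).trans_lt hℓ
    have hw : ∀ i < n k, a ≤ σ ((i : ℝ) / n k) ^ 2 ∧ σ ((i : ℝ) / n k) ^ 2 ≤ b := fun i hi =>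
      hσ2 _ ⟨by positivity, (div_le_one hn₀).2 (by exact_mod_cast hi.le)⟩
    calc a / (2 * b) * (k : ℝ) ^ (1 - δ) = a / ((k : ℝ) ^ δ * b) * (k / 2) := by
          rw [Real.rpow_sub hk₀, Real.rpow_one]; field_simp
      _ ≤ a / (n k * b) * (k - n k) := by gcongr; linarith
      _ ≤ m ℓ k := by
          rw [hm]; push_cast
          exact div_mul_le_floor_share_add_one (w := fun i => σ ((i : ℝ) / n k) ^ 2) ha hw hℓ
            (by linarith)
  refine (rpow_mul_sum_exp_le (m := fun ℓ => (m ℓ k : ℝ)) (by positivity) hnk (by linarith)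
    hc.le hm_ge).trans_eq ?_
  rw [← Real.rpow_mul hk₀.le]
  congr 2 <;> ring
end
end
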